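/- Let W be a set of n₀ vertices, Σ a finite alphabet, π a Unique Games instance on the complete graph over W with alphabet Σ, and d ≥ 1 an integer. Then every feasible edge set F of the derived Constrained Connectivity instance satisfies |F| ≥ d·OPT_UG + n₀(n₀−1)/2 + d·n₀ + |Σ|·n₀, where OPT_UG is the minimum of Σ_{x∈W} |L(x)| over all labelings L : W → (subsets of Σ) such that every pair {x,y} ⊆ W has some α ∈ L(x) with π_{xy}(α) ∈ L(y). -/

import Mathlib

/-- The vertices of the Constrained Connectivity instance derived from a Unique
Games instance on vertex set `W` with alphabet `A` and duplication parameter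
`d`: outer nodes `(x,i) ∈ W × [d]`, label nodes `(x,α) ∈ W × A`, and a dummy
node `z`. -/
inductive UGV (W A : Type) (d : ℕ) : Type
  | outer : W → Fin d → UGV W A d
  | lab : W → A → UGV W A d
  | z : UGV W A d
deriving DecidableEq

/-- The edge set of the derived instance: `{(x,i),(x,α)}` for all `x, i, α`;
`{(x,α),(y,β)}` whenever `x ≠ y` and `π x y α = β`; and `{v,z}` for all `v`. -/
def ugEdges {W A : Type} {d : ℕ} (π : W → W → A ≃ A) : Set (Sym2 (UGV W A d)) :=
  {e | (∃ (x : W) (i : Fin d) (α : A), e = s(UGV.outer x i, UGV.lab x α)) ∨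
       (∃ (x y : W) (α : A), x ≠ y ∧ e = s(UGV.lab x α, UGV.lab y (π x y α))) ∨
       (∃ v : UGV W A d, e = s(v, UGV.z))}

/-- The safe sets of the derived instance: for distinct `x, y ∈ W` and `i ∈ [d]`,
`S((x,i),(y,i)) = {(x,i),(y,i)} ∪ ({x} × A) ∪ ({y} × A)`; every other pair's safe
set is its two endpoints together with `z`. -/
def ugSafe {W A : Type} [DecidableEq W] {d : ℕ} :
    UGV W A d → UGV W A d → Set (UGV W A d)
  | UGV.outer x i, UGV.outer y j =>
      if x ≠ y ∧ i = j then
        {UGV.outer x i, UGV.outer y j} ∪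
          {w | ∃ α : A, w = UGV.lab x α ∨ w = UGV.lab y α}
      else {UGV.outer x i, UGV.outer y j, UGV.z}
  | p, q => {p, q, UGV.z}

/-- The multi-labeling `Lab` is a valid solution of the Unique Games instance
`π`: every pair of distinct vertices is satisfied. -/
def ugValid {W A : Type} (π : W → W → A ≃ A) (Lab : W → Finset A) : Prop :=
  ∀ x y : W, x ≠ y → ∃ α ∈ Lab x, π x y α ∈ Lab y


/-! Every non-`z` vertex `v` has safe set `{v, z}`, so `F` contains the edge `{v, z}`:
`d·n₀ + |Σ|·n₀` edges. For `x ≠ y`, a safe path from `(x,i)` to `(y,i)` runs inside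
`{(x,i), (y,i)} ∪ ({x} × Σ) ∪ ({y} × Σ)`, whose only edges are spokes and label edges; following
it shows that `F` contains spokes `(x,i)(x,α)`, `(y,i)(y,π_{xy}(α))` and the label edge between
their label ends. Hence for each level `i` the spokes of `F` form a valid multi-labeling, giving
at least `d·OPT` spokes, and every pair `{x, y}` is covered by its own label edge of `F`. -/

open Finset SimpleGraph

namespace UGV

variable {W A : Type} {d : ℕ}

section Edges

variable {π : W → W → A ≃ A} {x y : W} {i j : Fin d} {α β : A}

@[simp]
lemma outer_outer_notMem_ugEdges : s(outer x i, outer y j) ∉ ugEdges π := by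
  simp [ugEdges]

@[simp]
lemma outer_lab_mem_ugEdges : s(outer x i, lab y β) ∈ ugEdges π ↔ x = y := by
  simp [ugEdges, eq_comm]

@[simp]
lemma lab_outer_mem_ugEdges : s(lab x α, outer y i) ∈ ugEdges π ↔ x = y := by
  rw [Sym2.eq_swap, outer_lab_mem_ugEdges, eq_comm]

lemma lab_lab_mem_ugEdges (hπ : ∀ x y, π y x = (π x y).symm) :
    s(lab x α, lab y β) ∈ ugEdges (d := d) π ↔ x ≠ y ∧ π x y α = β := by
  simp only [ugEdges, ne_eq, exists_and_left, Set.mem_ofPred_eq, Sym2.eq, Sym2.rel_iff',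
    Prod.mk.injEq, reduceCtorEq, lab.injEq, false_and, Prod.swap_prod_mk, and_false, or_self,
    exists_false, or_false, false_or]
  constructor
  · rintro ⟨x', y', hne, α', (⟨⟨rfl, rfl⟩, rfl, rfl⟩ | ⟨⟨rfl, rfl⟩, rfl, rfl⟩)⟩
    · exact ⟨hne, rfl⟩
    · exact ⟨Ne.symm hne, by rw [hπ, Equiv.symm_apply_apply]⟩
  · rintro ⟨hne, rfl⟩
    exact ⟨x, y, hne, α, by simp⟩

end Edges

variable [DecidableEq W]

def IsFeasible (F : Finset (Sym2 (UGV W A d))) : Prop :=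
  ∀ p q : UGV W A d, ∃ w : (fromEdgeSet (F : Set (Sym2 (UGV W A d)))).Walk p q,
    ∀ v ∈ w.support, v ∈ ugSafe p q

namespace IsFeasible

variable {F : Finset (Sym2 (UGV W A d))}

lemma exists_boundary_edge (hF : IsFeasible F) {p q : UGV W A d} (R : Set (UGV W A d))
    (hp : p ∈ R) (hq : q ∉ R) :
    ∃ a b, s(a, b) ∈ F ∧ a ≠ b ∧ a ∈ ugSafe p q ∧ b ∈ ugSafe p q ∧ a ∈ R ∧ b ∉ R := by
  obtain ⟨w, hw⟩ := hF p q
  obtain ⟨e, he, ha, hb⟩ := w.exists_boundary_dart R hp hq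
  exact ⟨e.fst, e.snd, ((fromEdgeSet_adj _).1 e.adj).1, e.adj.ne,
    hw _ (w.dart_fst_mem_support_of_mem_darts he), hw _ (w.dart_snd_mem_support_of_mem_darts he),
    ha, hb⟩

lemma mem_of_ne_z (hF : IsFeasible F) {v : UGV W A d} (hv : v ≠ z) : s(v, z) ∈ F := by
  obtain ⟨a, b, hab, -, -, hb, rfl, hba⟩ := hF.exists_boundary_edge {v} rfl (Ne.symm hv)
  have hS : ugSafe a z = {a, z, z} := by cases a <;> rfl
  rw [hS] at hb
  rcases hb with rfl | rfl | rfl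
  · exact absurd rfl hba
  all_goals exact hab

lemma exists_spoke_spoke_cross (hF : IsFeasible F) {π : W → W → A ≃ A}
    (hπ : ∀ x y, π y x = (π x y).symm) (hFE : (F : Set (Sym2 (UGV W A d))) ⊆ ugEdges π)
    {x y : W} (hxy : x ≠ y) (i : Fin d) :
    ∃ α, s(outer x i, lab x α) ∈ F ∧ s(outer y i, lab y (π x y α)) ∈ F ∧
      s(lab x α, lab y (π x y α)) ∈ F := by
  by_contra! hP
  -- without such an `α`, `R` would contain `(x,i)` but not `(y,i)` and have no safe boundary edge
  let R : Set (UGV W A d) := {v | v = outer x i ∨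
    (∃ α, v = lab x α ∧ s(outer x i, lab x α) ∈ F) ∨
    ∃ α, v = lab y (π x y α) ∧ s(outer x i, lab x α) ∈ F ∧ s(lab x α, lab y (π x y α)) ∈ F}
  have hS : ugSafe (outer x i) (outer y i) =
      {outer x i, outer y i} ∪ {w | ∃ α : A, w = lab x α ∨ w = lab y α} :=
    if_pos ⟨hxy, rfl⟩
  obtain ⟨a, b, hab, hne, -, hb, haR, hbR⟩ :=
    hF.exists_boundary_edge (q := outer y i) R (Or.inl rfl) (by simp [R, hxy.symm])
  have hE := hFE hab
  rw [hS] at hb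
  rcases haR with rfl | ⟨α, rfl, hα⟩ | ⟨α, rfl, hα, hαc⟩
  · rcases hb with (rfl | rfl) | ⟨γ, rfl | rfl⟩
    · exact hne rfl
    · exact outer_outer_notMem_ugEdges hE
    · exact hbR (Or.inr (Or.inl ⟨γ, rfl, hab⟩))
    · exact hxy (outer_lab_mem_ugEdges.1 hE)
  · rcases hb with (rfl | rfl) | ⟨γ, rfl | rfl⟩
    · exact hbR (Or.inl rfl)
    · exact hxy (lab_outer_mem_ugEdges.1 hE)
    · exact ((lab_lab_mem_ugEdges hπ).1 hE).1 rfl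
    · obtain ⟨-, rfl⟩ := (lab_lab_mem_ugEdges hπ).1 hE
      exact hbR (Or.inr (Or.inr ⟨α, rfl, hα, hab⟩))
  · rcases hb with (rfl | rfl) | ⟨γ, rfl | rfl⟩
    · exact hxy (lab_outer_mem_ugEdges.1 hE).symm
    · exact hP α hα (by rwa [Sym2.eq_swap]) hαc
    · obtain ⟨-, rfl⟩ := (lab_lab_mem_ugEdges hπ).1 hE
      rw [hπ, Equiv.symm_apply_apply] at hbR
      exact hbR (Or.inr (Or.inl ⟨α, rfl, hα⟩))
    · exact ((lab_lab_mem_ugEdges hπ).1 hE).1 rfl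

end IsFeasible

section Counting

open scoped Classical

def IsSpoke (e : Sym2 (UGV W A d)) : Prop := ∃ x i α, e = s(outer x i, lab x α)

def IsLabEdge (e : Sym2 (UGV W A d)) : Prop := ∃ x α y β, e = s(lab x α, lab y β)

variable (F : Finset (Sym2 (UGV W A d)))

lemma card_spokes_add_card_labEdges_add_card_zEdges_le :
    #{e ∈ F | IsSpoke e} + #{e ∈ F | IsLabEdge e} + #{e ∈ F | z ∈ e} ≤ #F := by
  have hSC : Disjoint {e ∈ F | IsSpoke e} {e ∈ F | IsLabEdge e} := by
    refine disjoint_filter.2 ?_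
    rintro _ - ⟨x, i, α, rfl⟩ ⟨x', α', y', β', h⟩
    simp at h
  have hZ : Disjoint ({e ∈ F | IsSpoke e} ∪ {e ∈ F | IsLabEdge e}) {e ∈ F | z ∈ e} := by
    refine disjoint_union_left.2 ⟨disjoint_filter.2 ?_, disjoint_filter.2 ?_⟩
    · rintro _ - ⟨x, i, α, rfl⟩
      simp
    · rintro _ - ⟨x, α, y, β, rfl⟩
      simp
  rw [← card_union_of_disjoint hSC, ← card_union_of_disjoint hZ]
  exact card_le_card (union_subset (union_subset (filter_subset _ _) (filter_subset _ _))
    (filter_subset _ _))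

def owner (x₀ : W) : UGV W A d → W
  | outer x _ => x
  | lab x _ => x
  | z => x₀

lemma choose_two_le_card_labEdges [Fintype W]
    (h : ∀ x y : W, x ≠ y → ∃ α β, s(lab x α, lab y β) ∈ F) :
    (Fintype.card W).choose 2 ≤ #{e ∈ F | IsLabEdge e} := by
  rcases isEmpty_or_nonempty W with hW | ⟨⟨x₀⟩⟩
  · simp
  rw [← card_univ, ← Sym2.card_image_offDiag]
  refine card_le_card_of_surjOn (Sym2.map (owner x₀)) ?_
  intro e he
  simp only [coe_image, Set.mem_image, mem_coe, mem_offDiag, mem_univ, true_and] at he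
  obtain ⟨⟨x, y⟩, hxy, rfl⟩ := he
  obtain ⟨α, β, hF⟩ := h x y hxy
  exact ⟨s(lab x α, lab y β), mem_filter.2 ⟨hF, x, α, y, β, rfl⟩, rfl⟩

variable [Fintype A]

noncomputable def spokeLabeling (i : Fin d) (x : W) : Finset A :=
  {α | s(outer x i, lab x α) ∈ F}

lemma ugValid_spokeLabeling {F : Finset (Sym2 (UGV W A d))} (hF : IsFeasible F)
    {π : W → W → A ≃ A} (hπ : ∀ x y, π y x = (π x y).symm)
    (hFE : (F : Set (Sym2 (UGV W A d))) ⊆ ugEdges π) (i : Fin d) :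
    ugValid π (spokeLabeling F i) := by
  intro x y hxy
  obtain ⟨α, hx, hy, -⟩ := hF.exists_spoke_spoke_cross hπ hFE hxy i
  exact ⟨α, by simpa [spokeLabeling], by simpa [spokeLabeling]⟩

variable [Fintype W]

lemma sum_card_spokeLabeling_le :
    ∑ i, ∑ x, #(spokeLabeling F i x) ≤ #{e ∈ F | IsSpoke e} := by
  let spoke : Fin d × W × A → Sym2 (UGV W A d) := fun t => s(outer t.2.1 t.1, lab t.2.1 t.2.2)
  calc ∑ i, ∑ x, #(spokeLabeling F i x) = #{t | spoke t ∈ F} := by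
        simp only [card_filter, Fintype.sum_prod_type, spokeLabeling, spoke]
    _ ≤ #{e ∈ F | IsSpoke e} := by
        refine card_le_card_of_injOn spoke ?_ ?_
        · intro t ht
          simp only [coe_filter, mem_univ, true_and, Set.mem_ofPred_eq] at ht
          exact mem_filter.2 ⟨ht, t.2.1, t.1, t.2.2, rfl⟩
        · rintro ⟨i, x, α⟩ - ⟨i', x', α'⟩ - h
          simp_all [spoke]

lemma card_mul_add_card_mul_le_card_zEdges (h : ∀ v : UGV W A d, v ≠ z → s(v, z) ∈ F) :
    Fintype.card W * d + Fintype.card W * Fintype.card A ≤ #{e ∈ F | z ∈ e} := by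
  let vertex : (W × Fin d) ⊕ (W × A) → UGV W A d :=
    Sum.elim (fun t => outer t.1 t.2) (fun t => lab t.1 t.2)
  have hvertex : Function.Injective vertex :=
    Function.Injective.sumElim (fun _ _ h => by simp_all [Prod.ext_iff])
      (fun _ _ h => by simp_all [Prod.ext_iff]) (by simp)
  have hz : ∀ t, vertex t ≠ z := by rintro (_ | _) <;> simp [vertex]
  calc Fintype.card W * d + Fintype.card W * Fintype.card A
        = #(univ : Finset ((W × Fin d) ⊕ (W × A))) := by simp
    _ ≤ #{e ∈ F | z ∈ e} := by
        refine card_le_card_of_injOn (fun t => s(vertex t, z)) ?_ ?_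
        · intro t _
          exact mem_filter.2 ⟨h _ (hz t), Sym2.mem_mk_right _ _⟩
        · intro t _ t' _ htt'
          exact hvertex (Sym2.congr_left.1 htt')

end Counting

end UGV

theorem stmt11_general {W A : Type} [Fintype W] [Fintype A] [DecidableEq W]
    (π : W → W → A ≃ A) (hπ : ∀ x y : W, π y x = (π x y).symm)
    (d : ℕ) (hd : 1 ≤ d)
    (OPT : ℕ)
    (hOPT_min : ∀ Lab : W → Finset A, ugValid π Lab → OPT ≤ ∑ x : W, (Lab x).card)
    (F : Finset (Sym2 (UGV W A d)))
    (hFE : (↑F : Set (Sym2 (UGV W A d))) ⊆ ugEdges π)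
    (hF : ∀ p q : UGV W A d,
      ∃ w : (SimpleGraph.fromEdgeSet (↑F : Set (Sym2 (UGV W A d)))).Walk p q,
        ∀ v ∈ w.support, v ∈ ugSafe p q) :
    d * OPT + Fintype.card W * (Fintype.card W - 1) / 2 + d * Fintype.card W +
      Fintype.card A * Fintype.card W ≤ F.card := by
  classical
  have hFeas : UGV.IsFeasible F := hF
  have hSpokes : d * OPT ≤ #{e ∈ F | UGV.IsSpoke e} :=
    calc d * OPT = ∑ _i : Fin d, OPT := by simp
      _ ≤ ∑ i, ∑ x, #(UGV.spokeLabeling F i x) :=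
          sum_le_sum fun i _ => hOPT_min _ (UGV.ugValid_spokeLabeling hFeas hπ hFE i)
      _ ≤ #{e ∈ F | UGV.IsSpoke e} := UGV.sum_card_spokeLabeling_le F
  have hLabEdges := UGV.choose_two_le_card_labEdges F fun x y hxy =>
    have ⟨α, _, _, hcross⟩ := hFeas.exists_spoke_spoke_cross hπ hFE hxy ⟨0, hd⟩
    ⟨α, _, hcross⟩
  have hZEdges := UGV.card_mul_add_card_mul_le_card_zEdges F fun _ hv => hFeas.mem_of_ne_z hv
  have hTotal := UGV.card_spokes_add_card_labEdges_add_card_zEdges_le F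
  rw [← Nat.choose_two_right]
  linarith

/-- Every feasible edge set of the Constrained Connectivity instance derived
from a Unique Games instance on `n₀` vertices has at least
`d·OPT_UG + n₀(n₀-1)/2 + d·n₀ + |A|·n₀` edges, where `OPT_UG` is the minimum
total number of labels in a valid multi-labeling. -/
theorem stmt11 {W A : Type} [Fintype W] [Fintype A] [DecidableEq W] [DecidableEq A]
    (π : W → W → A ≃ A) (hπ : ∀ x y : W, π y x = (π x y).symm)
    (d : ℕ) (hd : 1 ≤ d)
    (OPT : ℕ)
    (hOPT_ex : ∃ Lab : W → Finset A, ugValid π Lab ∧ ∑ x : W, (Lab x).card = OPT)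
    (hOPT_min : ∀ Lab : W → Finset A, ugValid π Lab → OPT ≤ ∑ x : W, (Lab x).card)
    (F : Finset (Sym2 (UGV W A d)))
    (hFE : (↑F : Set (Sym2 (UGV W A d))) ⊆ ugEdges π)
    (hF : ∀ p q : UGV W A d,
      ∃ w : (SimpleGraph.fromEdgeSet (↑F : Set (Sym2 (UGV W A d)))).Walk p q,
        ∀ v ∈ w.support, v ∈ ugSafe p q) :
    d * OPT + Fintype.card W * (Fintype.card W - 1) / 2 + d * Fintype.card W +
      Fintype.card A * Fintype.card W ≤ F.card :=
  stmt11_general π hπ d hd OPT hOPT_min F hFE hF
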